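/- Let H be a Hopf algebra and ⇀, ↼ a left and a right H-module coalgebra action of H on itself such that xy = (x₁ ⇀ y₁)(x₂ ↼ y₂) and (x₁ ⇀ y₁) ⊗ (x₂ ↼ y₂) = (x₂ ⇀ y₂) ⊗ (x₁ ↼ y₁) for all x, y ∈ H. Then x ⇀ 1 = ε(x)1 and 1 ↼ y = ε(y)1 for all x, y ∈ H. -/

import Mathlib

open TensorProduct Coalgebra HopfAlgebra LinearMap

/-- The bundled representation `Coalgebra.Repr` of the older Mathlib (index type bundled). -/
structure CoalgRepr.{u, v} (R : Type u) {A : Type v}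
    [CommSemiring R] [AddCommMonoid A] [Module R A] [CoalgebraStruct R A] (a : A) where
  {ι : Type v}
  (index : Finset ι)
  (left : ι → A)
  (right : ι → A)
  (eq : ∑ i ∈ index, left i ⊗ₜ[R] right i = CoalgebraStruct.comul a)

noncomputable section

variable (k H : Type*) [CommRing k] [Ring H] [HopfAlgebra k H]

/-- `f` is a left `H`-module coalgebra action of the Hopf algebra `H` on itself. -/
structure IsLeftModCoalgAction (f : H ⊗[k] H →ₗ[k] H) : Prop where
  one_act : ∀ a : H, f (1 ⊗ₜ a) = a
  mul_act : ∀ x y a : H, f ((x * y) ⊗ₜ a) = f (x ⊗ₜ f (y ⊗ₜ a))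
  counit_act : ∀ x a : H, counit (R := k) (f (x ⊗ₜ a)) = counit (R := k) x * counit (R := k) a
  comul_act : ∀ (x a : H) (rx : CoalgRepr k x) (ra : CoalgRepr k a),
      comul (R := k) (f (x ⊗ₜ a)) =
        ∑ i ∈ rx.index, ∑ j ∈ ra.index,
          f (rx.left i ⊗ₜ ra.left j) ⊗ₜ[k] f (rx.right i ⊗ₜ ra.right j)

/-- `g` is a right `H`-module coalgebra action of the Hopf algebra `H` on itself. -/
structure IsRightModCoalgAction (g : H ⊗[k] H →ₗ[k] H) : Prop where
  act_one : ∀ x : H, g (x ⊗ₜ 1) = x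
  act_mul : ∀ x a b : H, g (x ⊗ₜ (a * b)) = g (g (x ⊗ₜ a) ⊗ₜ b)
  counit_act : ∀ x a : H, counit (R := k) (g (x ⊗ₜ a)) = counit (R := k) x * counit (R := k) a
  comul_act : ∀ (x a : H) (rx : CoalgRepr k x) (ra : CoalgRepr k a),
      comul (R := k) (g (x ⊗ₜ a)) =
        ∑ i ∈ rx.index, ∑ j ∈ ra.index,
          g (rx.left i ⊗ₜ ra.left j) ⊗ₜ[k] g (rx.right i ⊗ₜ ra.right j)

/-- `(H, f, g)` (written `(H, ⇀, ↼)`) is a matched pair of actions on the Hopf algebra `H`: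
`f` is a left module coalgebra action, `g` a right module coalgebra action, satisfying the
matched pair conditions (MP1)–(MP5) and the extra condition `xy = (x₁ ⇀ y₁)(x₂ ↼ y₂)`. -/
structure IsMatchedPairOfActions (f g : H ⊗[k] H →ₗ[k] H) : Prop where
  left_action : IsLeftModCoalgAction k H f
  right_action : IsRightModCoalgAction k H g
  mp1 : ∀ (x a b : H) (rx : CoalgRepr k x) (ra : CoalgRepr k a),
      f (x ⊗ₜ (a * b)) =
        ∑ i ∈ rx.index, ∑ j ∈ ra.index,
          f (rx.left i ⊗ₜ ra.left j) * f (g (rx.right i ⊗ₜ ra.right j) ⊗ₜ b)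
  mp2 : ∀ x : H, f (x ⊗ₜ 1) = counit (R := k) x • (1 : H)
  mp3 : ∀ (x y a : H) (ry : CoalgRepr k y) (ra : CoalgRepr k a),
      g ((x * y) ⊗ₜ a) =
        ∑ i ∈ ry.index, ∑ j ∈ ra.index,
          g (x ⊗ₜ f (ry.left i ⊗ₜ ra.left j)) * g (ry.right i ⊗ₜ ra.right j)
  mp4 : ∀ a : H, g ((1 : H) ⊗ₜ a) = counit (R := k) a • (1 : H)
  mp5 : ∀ (x a : H) (rx : CoalgRepr k x) (ra : CoalgRepr k a),
      (∑ i ∈ rx.index, ∑ j ∈ ra.index,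
        f (rx.left i ⊗ₜ ra.left j) ⊗ₜ[k] g (rx.right i ⊗ₜ ra.right j)) =
      ∑ i ∈ rx.index, ∑ j ∈ ra.index,
        f (rx.right i ⊗ₜ ra.right j) ⊗ₜ[k] g (rx.left i ⊗ₜ ra.left j)
  mp_mul : ∀ (x y : H) (rx : CoalgRepr k x) (ry : CoalgRepr k y),
      x * y = ∑ i ∈ rx.index, ∑ j ∈ ry.index,
        f (rx.left i ⊗ₜ ry.left j) * g (rx.right i ⊗ₜ ry.right j)

/-- The braiding operator `r(x ⊗ y) = (x₁ ⇀ y₁) ⊗ (x₂ ↼ y₂)` associated to the pair `(f, g)`. -/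
def braidOp (f g : H ⊗[k] H →ₗ[k] H) : H ⊗[k] H →ₗ[k] H ⊗[k] H :=
  TensorProduct.map f g ∘ₗ (tensorTensorTensorComm k H H H H).toLinearMap
    ∘ₗ TensorProduct.map (comul (R := k)) (comul (R := k))


/-! Setting `y = 1` in `xy = (x₁ ⇀ y₁)(x₂ ↼ y₂)` gives `x = (x₁ ⇀ 1) x₂`: in the convolution
algebra of `End H`, the map `φ = (· ⇀ 1)` satisfies `φ * id = id`. Since `id` is
convolution-invertible with inverse the antipode, `φ = 1 = η ∘ ε`. Symmetrically `x = x₁ (1 ↼ x₂)`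
gives `id * (1 ↼ ·) = id`. -/

namespace CoalgRepr

variable {R A : Type*} [CommSemiring R]

def ofRepr [AddCommMonoid A] [Module R A] [CoalgebraStruct R A] {a : A} {ι : Type _}
    (r : Coalgebra.Repr R a ι) : CoalgRepr R a :=
  ⟨r.index, r.left, r.right, r.eq⟩

variable (R A) in
def one [Semiring A] [Bialgebra R A] : CoalgRepr R (1 : A) where
  ι := PUnit
  index := Finset.univ
  left _ := 1
  right _ := 1
  eq := by simp [Algebra.TensorProduct.one_def]

end CoalgRepr

namespace LinearMap

open WithConv

variable {R H : Type*} [CommSemiring R] [Semiring H] [HopfAlgebra R H]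

lemma isUnit_toConv_id : IsUnit (toConv (id : H →ₗ[R] H)) :=
  ⟨⟨_, _, id_mul_antipode, antipode_mul_id⟩, rfl⟩

lemma convMul_id_eq_id_iff {φ : H →ₗ[R] H} : toConv φ * toConv id = toConv id ↔ toConv φ = 1 :=
  isUnit_toConv_id.mul_eq_right

lemma id_convMul_eq_id_iff {ψ : H →ₗ[R] H} : toConv id * toConv ψ = toConv id ↔ toConv ψ = 1 :=
  isUnit_toConv_id.mul_eq_left

end LinearMap

theorem stmt18 (f g : H ⊗[k] H →ₗ[k] H)
    (hf : IsLeftModCoalgAction k H f) (hg : IsRightModCoalgAction k H g)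
    (hmul : ∀ (x y : H) (rx : CoalgRepr k x) (ry : CoalgRepr k y),
      x * y = ∑ i ∈ rx.index, ∑ j ∈ ry.index,
        f (rx.left i ⊗ₜ ry.left j) * g (rx.right i ⊗ₜ ry.right j)) :
    (∀ x : H, f (x ⊗ₜ 1) = counit (R := k) x • (1 : H)) ∧
    ∀ y : H, g ((1 : H) ⊗ₜ y) = counit (R := k) y • (1 : H) := by
  have hleft : WithConv.toConv (f ∘ₗ (mk k H H).flip 1) * WithConv.toConv LinearMap.id =
      WithConv.toConv LinearMap.id := by
    ext x
    rw [(ℛ k x).convMul_apply]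
    simpa [CoalgRepr.one, CoalgRepr.ofRepr, hg.act_one] using
      (hmul x 1 (.ofRepr (ℛ k x)) (.one k H)).symm
  have hright : WithConv.toConv LinearMap.id * WithConv.toConv (g ∘ₗ mk k H H 1) =
      WithConv.toConv LinearMap.id := by
    ext y
    rw [(ℛ k y).convMul_apply]
    simpa [CoalgRepr.one, CoalgRepr.ofRepr, hf.one_act] using
      (hmul 1 y (.one k H) (.ofRepr (ℛ k y))).symm
  refine ⟨fun x => ?_, fun y => ?_⟩
  · simpa [Algebra.algebraMap_eq_smul_one] using congr($(convMul_id_eq_id_iff.mp hleft) x)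
  · simpa [Algebra.algebraMap_eq_smul_one] using congr($(id_convMul_eq_id_iff.mp hright) y)

end
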